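/- Let M be a finitely generated ℤⁿ-graded R-module that is positively g-determined and satisfies dim_K M_a ≤ 1 for all a ∈ ℤⁿ. Let M ≅ ⊕_{i∈I} Rᵢ(−sᵢ) be a Hilbert decomposition of M with sᵢ ⪯ g, and suppose that Rᵢ ∩ Ann(M_{sᵢ}) = 0 for every i ∈ I. Then for any choice of nonzero elements mᵢ ∈ M_{sᵢ}, the decomposition M = ⊕_{i∈I} mᵢRᵢ is a Stanley decomposition of M (as multigraded R-modules), and each mᵢRᵢ equals Rᵢ(−sᵢ) as a multigraded K-vector space. -/

import Mathlib

open MvPolynomial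

/-!  Setting: `R = K[X₁,…,Xₙ]` with the `ℤⁿ`-grading `deg Xᵢ = eᵢ`.  A multigraded
`R`-module is a module `M` over `MvPolynomial (Fin n) K` together with a family
`gr : (Fin n → ℤ) → Submodule K M` of `K`-subspaces forming a direct sum
decomposition of `M` (the class `DirectSum.Decomposition gr`) which is compatible
with the `R`-action (`GradedSMul gr`). -/

variable {K : Type*} [Field K] {n : ℕ} {M : Type*} [AddCommGroup M] [Module K M]
  [Module (MvPolynomial (Fin n) K) M] [IsScalarTower K (MvPolynomial (Fin n) K) M]

/-- The grading is compatible with the `R`-module structure: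
multiplication by `Xᵢ` maps `M_a` into `M_{a+eᵢ}`. -/
def GradedSMul (gr : (Fin n → ℤ) → Submodule K M) : Prop :=
  ∀ (i : Fin n) (a : Fin n → ℤ), ∀ x ∈ gr a,
    (MvPolynomial.X i : MvPolynomial (Fin n) K) • x ∈ gr (a + Pi.single i 1)

/-- `M` is positively `g`-determined: `M_a = 0` unless `a ∈ ℕⁿ`, and the
multiplication map `·Xᵢ : M_a → M_{a+eᵢ}` is bijective whenever `aᵢ ≥ gᵢ`. -/
def PosDetermined (gr : (Fin n → ℤ) → Submodule K M) (g : Fin n → ℤ) : Prop :=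
  (∀ a : Fin n → ℤ, ¬ (0 : Fin n → ℤ) ≤ a → gr a = ⊥) ∧
  ∀ (i : Fin n) (a : Fin n → ℤ), g i ≤ a i →
    (∀ x ∈ gr a, (MvPolynomial.X i : MvPolynomial (Fin n) K) • x = 0 → x = 0) ∧
    (∀ y ∈ gr (a + Pi.single i 1), ∃ x ∈ gr a,
      (MvPolynomial.X i : MvPolynomial (Fin n) K) • x = y)

/-- A Hilbert partition `𝔓 : H_M(X)_{⪯g} = Σᵢ Q[aⁱ,bⁱ](X)`: the intervals satisfy
`0 ⪯ aⁱ ⪯ bⁱ ⪯ g` and, in each degree `0 ⪯ c ⪯ g`, the coefficient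
`dim_K M_c` of `H_M(X)_{⪯g}` equals the number of `i` with `aⁱ ⪯ c ⪯ bⁱ`. -/
def IsHilbertPartition (gr : (Fin n → ℤ) → Submodule K M) (g : Fin n → ℤ)
    {r : ℕ} (a b : Fin r → Fin n → ℤ) : Prop :=
  (∀ i, (0 : Fin n → ℤ) ≤ a i ∧ a i ≤ b i ∧ b i ≤ g) ∧
  ∀ c : Fin n → ℤ, (0 : Fin n → ℤ) ≤ c → c ≤ g →
    Module.rank K ↥(gr c) =
      (((Finset.univ : Finset (Fin r)).filter
        fun i => (∀ j, a i j ≤ c j) ∧ (∀ j, c j ≤ b i j)).card : Cardinal)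

/-- `𝓖[a,b] = {c ∈ [a,b] : c_j = a_j for all j with b_j = g_j}`. -/
noncomputable def Gset {n : ℕ} (g a b : Fin n → ℤ) : Finset (Fin n → ℤ) :=
  (Finset.Icc a b).filter fun c => ∀ j, b j = g j → c j = a j

/-- `Z_b = {j : b_j = g_j}`. -/
def Zset {n : ℕ} (g b : Fin n → ℤ) : Finset (Fin n) :=
  Finset.univ.filter fun j => b j = g j

/-- `ρ(b) = |Z_b|`. -/
def rho {n : ℕ} (g b : Fin n → ℤ) : ℕ := (Zset g b).card

/-- A Hilbert decomposition `M ≅ ⊕_{i∈I} K[Zᵢ](−sᵢ)` as multigraded `K`-vector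
spaces: in each degree `c ∈ ℤⁿ`, `dim_K M_c` equals the number of indices `i`
with `sᵢ ⪯ c` and `c_j = (sᵢ)_j` for all `j ∉ Zᵢ`. -/
def IsHilbertDecomp (gr : (Fin n → ℤ) → Submodule K M)
    {ι : Type*} [Fintype ι] (Z : ι → Finset (Fin n)) (s : ι → Fin n → ℤ) : Prop :=
  ∀ c : Fin n → ℤ, Module.rank K ↥(gr c) =
    (((Finset.univ : Finset ι).filter
      fun i => (∀ j, s i j ≤ c j) ∧ (∀ j, j ∉ Z i → c j = s i j)).card : Cardinal)

/-- The multigraded `K`-vector subspace `x·K[Z] ⊆ M`. -/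
def stanleySpace (K : Type*) [Field K] {n : ℕ} {M : Type*} [AddCommGroup M]
    [Module K M] [Module (MvPolynomial (Fin n) K) M]
    (x : M) (Z : Finset (Fin n)) : Submodule K M :=
  Submodule.span K
    ((fun t : Fin n →₀ ℕ => (MvPolynomial.monomial t (1 : K)) • x) ''
      {t : Fin n →₀ ℕ | ∀ j ∉ Z, t j = 0})

/-- A Stanley decomposition `M = ⊕_{i∈I} mᵢK[Zᵢ]` of `M`: the `mᵢ` are homogeneous
of degree `sᵢ`, `K[Zᵢ] ∩ Ann(mᵢ) = 0`, and `M` is the direct sum of the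
multigraded subspaces `mᵢK[Zᵢ]`. -/
def IsStanleyDecomp (gr : (Fin n → ℤ) → Submodule K M)
    {ι : Type*} [Fintype ι] (Z : ι → Finset (Fin n)) (s : ι → Fin n → ℤ)
    (m : ι → M) : Prop :=
  (∀ i, m i ∈ gr (s i)) ∧
  (∀ i, ∀ q ∈ MvPolynomial.supported K (↑(Z i) : Set (Fin n)), q • m i = 0 → q = 0) ∧
  (iSupIndep fun i => stanleySpace K (m i) (Z i)) ∧
  (⨆ i, stanleySpace K (m i) (Z i)) = ⊤

/-!
Each `mᵢK[Zᵢ]` is spanned by the homogeneous elements `u • mᵢ`, `u` a monomial in `K[Zᵢ]`,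
which are nonzero: since `dim M_{sᵢ} ≤ 1` we have `M_{sᵢ} = K mᵢ`, so the annihilator condition
on `M_{sᵢ}` passes to `mᵢ`. Hence the degree-`c` component of `mᵢK[Zᵢ]` is all of `M_c` when
`c ∈ sᵢ + ℕ^{Zᵢ}` and zero otherwise. As `dim M_c ≤ 1`, the Hilbert decomposition places each
degree `c` in at most one of the sets `sᵢ + ℕ^{Zᵢ}`, and in one of them whenever `M_c ≠ 0`. So in
every degree exactly one summand fills `M_c`, which gives both independence and spanning.
-/

open DirectSum

theorem Submodule.eq_of_le_of_ne_bot_of_rank_le_one {K V : Type*} [Field K] [AddCommGroup V]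
    [Module K V] {p q : Submodule K V} (hpq : p ≤ q) (hp : p ≠ ⊥)
    (hq : Module.rank K q ≤ 1) : p = q := by
  obtain ⟨v, -, hqv⟩ := (rank_submodule_le_one_iff q).mp hq
  obtain ⟨x, hxp, hx0⟩ := Submodule.exists_mem_ne_zero_of_ne_bot hp
  obtain ⟨a, rfl⟩ := Submodule.mem_span_singleton.mp (hqv (hpq hxp))
  have ha : a ≠ 0 := by rintro rfl; simp at hx0
  refine le_antisymm hpq (hqv.trans ((Submodule.span_singleton_le_iff_mem _ _).mpr ?_))
  simpa [smul_smul, ha] using p.smul_mem a⁻¹ hxp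

theorem iSupIndep_of_subsingleton_ne_bot {α ι : Type*} [CompleteLattice α] {f : ι → α}
    (hf : {i | f i ≠ ⊥}.Subsingleton) : iSupIndep f := by
  intro i
  by_cases hi : f i = ⊥
  · simp [hi]
  refine Disjoint.mono_right (le_of_eq ?_) disjoint_bot_right
  exact iSup₂_eq_bot.mpr fun j hji => by_contra fun hj => hji (hf hj hi)

section Graded

variable {Γ R V : Type*} [DecidableEq Γ] [Ring R] [AddCommGroup V] [Module R V]
  (ℳ : Γ → Submodule R V) [Decomposition ℳ]

theorem DirectSum.eq_zero_of_forall_decompose_eq_zero {x : V}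
    (h : ∀ c, (decompose ℳ x c : V) = 0) : x = 0 := by
  apply (decompose ℳ).injective
  ext c
  simpa using h c

theorem Submodule.isHomogeneous_span {T : Set V} (hT : ∀ x ∈ T, SetLike.IsHomogeneousElem ℳ x) :
    (Submodule.span R T).IsHomogeneous ℳ := by
  intro c x hx
  induction hx using Submodule.span_induction with
  | mem y hy =>
    obtain ⟨d, hd⟩ := hT y hy
    by_cases hdc : d = c
    · subst hdc
      rw [decompose_of_mem_same ℳ hd]
      exact Submodule.subset_span hy
    · rw [decompose_of_mem_ne ℳ hd hdc]
      exact zero_mem _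
  | zero => simp
  | add y z _ _ hy hz => simpa using add_mem hy hz
  | smul r y _ hy =>
    rw [decompose_smul, DirectSum.smul_apply, Submodule.coe_smul]
    exact Submodule.smul_mem _ r hy

theorem iSupIndep_of_isHomogeneous {ι : Type*} {S : ι → Submodule R V}
    (hS : ∀ i, (S i).IsHomogeneous ℳ) (h : ∀ c, iSupIndep fun i => S i ⊓ ℳ c) :
    iSupIndep S := by
  rw [iSupIndep_iff_finsetSum_eq_zero_imp_eq_zero]
  intro t v hv hsum i hi
  refine eq_zero_of_forall_decompose_eq_zero ℳ fun c => ?_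
  refine (iSupIndep_iff_finsetSum_eq_zero_imp_eq_zero _).mp (h c) t
    (fun i => decompose ℳ (v i) c) (fun i hi => ⟨hS i c (hv i hi), SetLike.coe_mem _⟩) ?_ i hi
  simpa using congrArg (fun y => (decompose ℳ y c : V)) hsum

end Graded

theorem smul_eq_zero_of_rank_le_one {K V A : Type*} [Field K] [AddCommGroup V] [Module K V]
    [SMulZeroClass A V] [SMulCommClass A K V] {P : Submodule K V}
    (hP : Module.rank K P ≤ 1) {x y : V} (hx : x ∈ P) (hx0 : x ≠ 0) (hy : y ∈ P) {q : A}
    (hq : q • x = 0) : q • y = 0 := by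
  have hPx : K ∙ x = P := Submodule.eq_of_le_of_ne_bot_of_rank_le_one
    ((Submodule.span_singleton_le_iff_mem _ _).mpr hx) (by simpa using hx0) hP
  obtain ⟨k, rfl⟩ := Submodule.mem_span_singleton.mp (hPx ▸ hy)
  rw [smul_comm, hq, smul_zero]

theorem MvPolynomial.monomial_mem_supported {σ R : Type*} [CommSemiring R] {s : Set σ}
    {t : σ →₀ ℕ} (ht : ∀ j ∉ s, t j = 0) (r : R) : monomial t r ∈ supported R s := by
  rcases eq_or_ne r 0 with rfl | hr
  · simp
  rw [mem_supported, vars_monomial hr]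
  intro j hj
  by_contra hjs
  exact Finsupp.mem_support_iff.mp hj (ht j hjs)

/-- The set of degrees of `K[Z](−s)`, i.e. `s + ℕ^Z`. -/
def shiftedOrthant (Z : Finset (Fin n)) (s : Fin n → ℤ) : Set (Fin n → ℤ) :=
  {c | (∀ j, s j ≤ c j) ∧ ∀ j, j ∉ Z → c j = s j}

theorem mem_shiftedOrthant_iff {Z : Finset (Fin n)} {s c : Fin n → ℤ} :
    c ∈ shiftedOrthant Z s ↔
      ∃ t : Fin n →₀ ℕ, (∀ j ∉ Z, t j = 0) ∧ s + (fun j => (t j : ℤ)) = c := by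
  constructor
  · rintro ⟨hsc, hZ⟩
    refine ⟨Finsupp.equivFunOnFinite.symm fun j => (c j - s j).toNat, fun j hj => ?_, ?_⟩
    · simp [hZ j hj]
    · funext j
      have := hsc j
      simp only [Pi.add_apply, Finsupp.coe_equivFunOnFinite_symm]
      omega
  · rintro ⟨t, ht, rfl⟩
    exact ⟨fun j => by simp, fun j hj => by simp [ht j hj]⟩

namespace IsHilbertDecomp

omit [Module (MvPolynomial (Fin n) K) M] [IsScalarTower K (MvPolynomial (Fin n) K) M]

variable {gr : (Fin n → ℤ) → Submodule K M} {ι : Type*} [Fintype ι] {Z : ι → Finset (Fin n)} {s : ι → Fin n → ℤ}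

theorem subsingleton_of_rank_le_one (hD : IsHilbertDecomp gr Z s) {c : Fin n → ℤ}
    (hc : Module.rank K (gr c) ≤ 1) : {i | c ∈ shiftedOrthant (Z i) (s i)}.Subsingleton := by
  intro i hi j hj
  rw [hD c, Nat.cast_le_one] at hc
  exact Finset.card_le_one.mp hc i (Finset.mem_filter.mpr ⟨Finset.mem_univ _, hi⟩)
    j (Finset.mem_filter.mpr ⟨Finset.mem_univ _, hj⟩)

theorem rank_eq_one (hD : IsHilbertDecomp gr Z s) {c : Fin n → ℤ}
    (hc : Module.rank K (gr c) ≤ 1) {i : ι} (hi : c ∈ shiftedOrthant (Z i) (s i)) :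
    Module.rank K (gr c) = 1 := by
  refine le_antisymm hc ?_
  rw [hD c]
  exact_mod_cast Finset.card_pos.mpr ⟨i, Finset.mem_filter.mpr ⟨Finset.mem_univ _, hi⟩⟩

theorem exists_mem_shiftedOrthant (hD : IsHilbertDecomp gr Z s) {c : Fin n → ℤ}
    (hc : gr c ≠ ⊥) : ∃ i, c ∈ shiftedOrthant (Z i) (s i) := by
  by_contra! h
  refine hc (Submodule.rank_eq_zero.mp ?_)
  rw [hD c, Nat.cast_eq_zero, Finset.card_eq_zero, Finset.filter_eq_empty_iff]
  exact fun i _ => h i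

end IsHilbertDecomp

section Multigraded

omit [IsScalarTower K (MvPolynomial (Fin n) K) M]

variable {gr : (Fin n → ℤ) → Submodule K M}

theorem GradedSMul.X_pow_smul_mem (hsmul : GradedSMul gr) (i : Fin n) (k : ℕ)
    {a : Fin n → ℤ} {x : M} (hx : x ∈ gr a) :
    (X i ^ k : MvPolynomial (Fin n) K) • x ∈ gr (a + k • Pi.single i 1) := by
  induction k with
  | zero => simpa using hx
  | succ k ih =>
    rw [pow_succ', mul_smul, succ_nsmul, ← add_assoc]
    exact hsmul i _ _ ih

theorem GradedSMul.monomial_smul_mem (hsmul : GradedSMul gr) (t : Fin n →₀ ℕ)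
    {a : Fin n → ℤ} {x : M} (hx : x ∈ gr a) :
    monomial t (1 : K) • x ∈ gr (a + fun j => (t j : ℤ)) := by
  induction t using Finsupp.induction with
  | zero => simpa [← Pi.zero_def] using hx
  | single_add i k t _ _ ih =>
    have hdeg : (a + fun j => ((Finsupp.single i k + t) j : ℤ))
        = a + (fun j => (t j : ℤ)) + k • Pi.single i 1 := by
      funext j
      by_cases h : j = i
      · subst h; simp; ring
      · simp [h, Finsupp.single_apply, Ne.symm h]
    rw [← mul_one (1 : K), ← monomial_mul, ← X_pow_eq_monomial, mul_smul, hdeg]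
    exact hsmul.X_pow_smul_mem i k ih

variable {x : M} {a : Fin n → ℤ} {Z : Finset (Fin n)}

theorem monomial_smul_mem_stanleySpace {t : Fin n →₀ ℕ} (ht : ∀ j ∉ Z, t j = 0) :
    monomial t (1 : K) • x ∈ stanleySpace K x Z :=
  Submodule.subset_span ⟨t, ht, rfl⟩

theorem stanleySpace_inf_eq_of_mem (hsmul : GradedSMul gr) (hx : x ∈ gr a)
    (hann : ∀ q ∈ supported K (Z : Set (Fin n)), q • x = 0 → q = 0) {c : Fin n → ℤ}
    (hc : c ∈ shiftedOrthant Z a) (hrank : Module.rank K (gr c) ≤ 1) :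
    stanleySpace K x Z ⊓ gr c = gr c := by
  obtain ⟨t, ht, rfl⟩ := mem_shiftedOrthant_iff.mp hc
  refine Submodule.eq_of_le_of_ne_bot_of_rank_le_one inf_le_right ?_ hrank
  refine (Submodule.ne_bot_iff _).mpr ⟨_, ⟨monomial_smul_mem_stanleySpace ht,
    hsmul.monomial_smul_mem t hx⟩, fun h0 => ?_⟩
  exact one_ne_zero (monomial_eq_zero.mp (hann _ (monomial_mem_supported ht 1) h0))

variable [Decomposition gr]

theorem isHomogeneous_stanleySpace (hsmul : GradedSMul gr) (hx : x ∈ gr a) :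
    (stanleySpace K x Z).IsHomogeneous gr :=
  Submodule.isHomogeneous_span gr <| by
    rintro _ ⟨t, -, rfl⟩
    exact ⟨_, hsmul.monomial_smul_mem t hx⟩

theorem stanleySpace_inf_eq_bot (hsmul : GradedSMul gr) (hx : x ∈ gr a) {c : Fin n → ℤ}
    (hc : c ∉ shiftedOrthant Z a) : stanleySpace K x Z ⊓ gr c = ⊥ := by
  have hle : stanleySpace K x Z ≤ ⨆ (d) (_ : d ≠ c), gr d := by
    refine Submodule.span_le.mpr ?_
    rintro _ ⟨t, ht, rfl⟩
    have hdeg : a + (fun j => (t j : ℤ)) ≠ c := fun h =>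
      hc (mem_shiftedOrthant_iff.mpr ⟨t, ht, h⟩)
    exact Submodule.mem_iSup_of_mem _ (Submodule.mem_iSup_of_mem hdeg
      (hsmul.monomial_smul_mem t hx))
  exact disjoint_iff.mp (((Decomposition.isInternal gr).submodule_iSupIndep c).symm.mono_left hle)

end Multigraded

theorem stanley_of_hilbert_of_rank_le_one_general
    (gr : (Fin n → ℤ) → Submodule K M) [DirectSum.Decomposition gr]
    (hsmul : GradedSMul gr)
    (hrank : ∀ c : Fin n → ℤ, Module.rank K ↥(gr c) ≤ 1)
    {ι : Type*} [Fintype ι]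
    (Z : ι → Finset (Fin n)) (s : ι → Fin n → ℤ)
    (hD : IsHilbertDecomp gr Z s)
    (hann : ∀ i, ∀ q ∈ MvPolynomial.supported K (↑(Z i) : Set (Fin n)),
      (∀ x ∈ gr (s i), q • x = 0) → q = 0)
    (m : ι → M) (hm : ∀ i, m i ∈ gr (s i)) (hm0 : ∀ i, m i ≠ 0) :
    IsStanleyDecomp gr Z s m ∧
      ∀ (i : ι) (c : Fin n → ℤ),
        Module.rank K ↥(stanleySpace K (m i) (Z i) ⊓ gr c)
          = if (∀ j, s i j ≤ c j) ∧ (∀ j, j ∉ Z i → c j = s i j) then 1 else 0 := by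
  have hann_m : ∀ i, ∀ q ∈ supported K (↑(Z i) : Set (Fin n)), q • m i = 0 → q = 0 :=
    fun i q hq hqm => hann i q hq fun x hx =>
      smul_eq_zero_of_rank_le_one (hrank _) (hm i) (hm0 i) hx hqm
  have hfull : ∀ i c, c ∈ shiftedOrthant (Z i) (s i) → stanleySpace K (m i) (Z i) ⊓ gr c = gr c :=
    fun i c hc => stanleySpace_inf_eq_of_mem hsmul (hm i) (hann_m i) hc (hrank c)
  have hbot : ∀ i c, c ∉ shiftedOrthant (Z i) (s i) → stanleySpace K (m i) (Z i) ⊓ gr c = ⊥ :=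
    fun i c hc => stanleySpace_inf_eq_bot hsmul (hm i) hc
  refine ⟨⟨hm, hann_m, ?_, ?_⟩, fun i c => ?_⟩
  · refine iSupIndep_of_isHomogeneous gr (fun i => isHomogeneous_stanleySpace hsmul (hm i))
      fun c => iSupIndep_of_subsingleton_ne_bot ?_
    exact (hD.subsingleton_of_rank_le_one (hrank c)).anti fun i hi => not_not.mp (mt (hbot i c) hi)
  · rw [eq_top_iff, ← (Decomposition.isInternal gr).submodule_iSup_eq_top]
    refine iSup_le fun c => ?_
    rcases eq_or_ne (gr c) ⊥ with hc | hc
    · simp [hc]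
    obtain ⟨i, hi⟩ := hD.exists_mem_shiftedOrthant hc
    exact (hfull i c hi).ge.trans
      (inf_le_left.trans (le_iSup (fun i => stanleySpace K (m i) (Z i)) i))
  · split_ifs with hi
    · rw [hfull i c hi, hD.rank_eq_one (hrank c) hi]
    · rw [hbot i c hi, rank_bot]

/-- **Corollary.**  Assume the finitely generated multigraded `R`-module `M` is
positively `g`-determined and `dim_K M_c ≤ 1` for all `c ∈ ℤⁿ`.  Let
`M ≅ ⊕_{i∈I} K[Zᵢ](−sᵢ)` be a Hilbert decomposition of `M` with `sᵢ ⪯ g` and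
`K[Zᵢ] ∩ Ann(M_{sᵢ}) = 0` for every `i ∈ I`.  Then for every choice of nonzero
elements `mᵢ ∈ M_{sᵢ}` the decomposition `M = ⊕_{i∈I} mᵢK[Zᵢ]` is a Stanley
decomposition of `M`, and each `mᵢK[Zᵢ]` equals `K[Zᵢ](−sᵢ)` as a multigraded
`K`-vector space (its degree-`c` component is one-dimensional if `sᵢ ⪯ c` and
`c_j = (sᵢ)_j` for all `j ∉ Zᵢ`, and zero otherwise). -/
theorem stanley_of_hilbert_of_rank_le_one
    (gr : (Fin n → ℤ) → Submodule K M) [DirectSum.Decomposition gr]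
    (hsmul : GradedSMul gr) [Module.Finite (MvPolynomial (Fin n) K) M]
    (g : Fin n → ℤ) (hg : (0 : Fin n → ℤ) ≤ g)
    (hM : PosDetermined gr g)
    (hrank : ∀ c : Fin n → ℤ, Module.rank K ↥(gr c) ≤ 1)
    {ι : Type*} [Fintype ι]
    (Z : ι → Finset (Fin n)) (s : ι → Fin n → ℤ)
    (hD : IsHilbertDecomp gr Z s) (hs : ∀ i, s i ≤ g)
    (hann : ∀ i, ∀ q ∈ MvPolynomial.supported K (↑(Z i) : Set (Fin n)),
      (∀ x ∈ gr (s i), q • x = 0) → q = 0)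
    (m : ι → M) (hm : ∀ i, m i ∈ gr (s i)) (hm0 : ∀ i, m i ≠ 0) :
    IsStanleyDecomp gr Z s m ∧
      ∀ (i : ι) (c : Fin n → ℤ),
        Module.rank K ↥(stanleySpace K (m i) (Z i) ⊓ gr c)
          = if (∀ j, s i j ≤ c j) ∧ (∀ j, j ∉ Z i → c j = s i j) then 1 else 0 :=
  stanley_of_hilbert_of_rank_le_one_general gr hsmul hrank Z s hD hann m hm hm0
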